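/- arXiv:2304.09312 — 2 statements merged into one kernel-verified Lean document; each statement's English description precedes it below -/
import Mathlib

section
/- Let F be the free group on two generators b and λ, and let p > 1, r ≠ 0 be integers with gcd(p, r) = 1. Suppose v = λ^{p x₁}(b λ^r)^{y₁} λ^{p x₂}(b λ^r)^{y₂} ⋯ λ^{p x_l}(b λ^r)^{y_l}, where all x_i are nonzero integers of the same sign and all y_i are nonnegative integers, and suppose u = λ^{p n₁} b^{m₁} λ^{p n₂} b^{m₂} ⋯ λ^{p n_k} b^{m_k}, where all n_i are nonzero integers of the same sign and all m_i are nonzero integers of the same sign. If u is conjugate to v in F, then y_j = 0 for every j, and hence v = λ^{p(x₁ + ⋯ + x_l)} is a p-th power in F. -/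
/-!
Let `ℤ ≀ ℤ/p` act on `ZMod p × ℤ`, with `λ` rotating the first coordinate and `b` raising the
second coordinate on the fibre over `0`. Then `λ^p` acts trivially, so `u` acts as a power of `b`,
which fixes `(1, 0)`. On the other hand `b λ^r` moves the first coordinate by `c ↦ c + r`, a
single `p`-cycle since `gcd (p, r) = 1`, and climbs one level each time it passes `0`; in the
coordinate `p z + val (c r⁻¹)` it is the translation by `1`. Hence `v`, acting as `(b λ^r)^{Σ yⱼ}`,
has a fixed point only if `Σ yⱼ = 0`, while being conjugate to `u` forces it to have one.
-/

open FreeGroup Equiv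

theorem List.prod_map_pow_eq_pow_sum {ι M : Type*} [Monoid M] (a : M) (f : ι → ℕ) (l : List ι) :
    (l.map fun i => a ^ f i).prod = a ^ (l.map f).sum := by
  induction l with
  | nil => simp
  | cons i l ih => simp [ih, pow_add]

theorem List.prod_map_zpow_eq_zpow_sum {ι G : Type*} [Group G] (a : G) (f : ι → ℤ)
    (l : List ι) : (l.map fun i => a ^ f i).prod = a ^ (l.map f).sum := by
  induction l with
  | nil => simp
  | cons i l ih => simp [ih, zpow_add]

theorem IsConj.exists_apply_eq_self {α : Type*} {σ τ : Perm α} (h : IsConj σ τ) {x : α}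
    (hx : σ x = x) : ∃ y, τ y = y := by
  obtain ⟨c, rfl⟩ := isConj_iff.1 h
  exact ⟨c x, by simp [hx]⟩

theorem Equiv.Perm.eq_zero_of_pow_apply_eq_self {α : Type*} {σ : Perm α} {h : α → ℤ}
    (hσ : ∀ x, h (σ x) = h x + 1) {n : ℕ} {x : α} (hx : (σ ^ n) x = x) : n = 0 := by
  have h_pow : ∀ k : ℕ, h ((σ ^ k) x) = h x + k := by
    intro k
    induction k with
    | zero => simp
    | succ k ih => rw [pow_succ', Perm.mul_apply, hσ, ih]; push_cast; ring
  have := h_pow n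
  rw [hx] at this
  omega

theorem ZMod.val_add_one_add_ite {p : ℕ} [Fact (1 < p)] (d : ZMod p) :
    ((d + 1).val : ℤ) + (if d + 1 = 0 then (p : ℤ) else 0) = d.val + 1 := by
  have hlt := d.val_lt
  rw [ZMod.val_add, ZMod.val_one]
  by_cases hd : d.val + 1 < p
  · have : d + 1 ≠ 0 := by
      rw [ne_eq, ← ZMod.val_eq_zero, ZMod.val_add, ZMod.val_one, Nat.mod_eq_of_lt hd]
      omega
    rw [if_neg this, Nat.mod_eq_of_lt hd]
    push_cast
    ring
  · have hd : d.val + 1 = p := by omega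
    have : d + 1 = 0 := by
      rw [← ZMod.val_eq_zero, ZMod.val_add, ZMod.val_one, hd, Nat.mod_self]
    rw [if_pos this, hd, Nat.mod_self]
    omega

namespace WreathPerm

variable {p : ℕ}

def rot : Perm (ZMod p × ℤ) := Equiv.addRight (1, 0)

def bump : Perm (ZMod p × ℤ) :=
  Equiv.prodShear (Equiv.refl _) fun c => Equiv.addRight (if c = 0 then 1 else 0)

theorem rot_zpow_apply (t : ℤ) (c : ZMod p) (z : ℤ) : (rot ^ t) (c, z) = (c + t, z) := by
  simp [rot]

theorem rot_zpow_natCast_mul (t : ℤ) : (rot : Perm (ZMod p × ℤ)) ^ ((p : ℤ) * t) = 1 := by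
  ext ⟨c, z⟩ <;> simp [rot_zpow_apply]

theorem bump_apply (c : ZMod p) (z : ℤ) : bump (c, z) = (c, z + if c = 0 then 1 else 0) := rfl

theorem bump_mul_rot_zpow_apply (r : ℤ) (c : ZMod p) (z : ℤ) :
    (bump * rot ^ r : Perm (ZMod p × ℤ)) (c, z) = (c + r, z + if c + r = 0 then 1 else 0) := by
  rw [Perm.mul_apply, rot_zpow_apply, bump_apply]

def height (ρ : ZMod p) (x : ZMod p × ℤ) : ℤ := p * x.2 + (x.1 * ρ⁻¹).val

theorem height_bump_mul_rot_zpow [Fact (1 < p)] {r : ℤ} (hr : IsUnit (r : ZMod p))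
    (x : ZMod p × ℤ) : height (r : ZMod p) ((bump * rot ^ r : Perm (ZMod p × ℤ)) x) =
      height r x + 1 := by
  obtain ⟨c, z⟩ := x
  have h_step : (c + r) * (r : ZMod p)⁻¹ = c * (r : ZMod p)⁻¹ + 1 := by
    rw [add_mul, ZMod.mul_inv_of_unit _ hr]
  have h_zero : c + r = 0 ↔ c * (r : ZMod p)⁻¹ + 1 = 0 := by
    rw [← h_step, (ZMod.isUnit_inv hr).mul_left_eq_zero]
  have := ZMod.val_add_one_add_ite (c * (r : ZMod p)⁻¹)
  simp only [height, bump_mul_rot_zpow_apply, h_step, h_zero]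
  split_ifs at this ⊢ <;> linarith

def rep : FreeGroup (Fin 2) →* Perm (ZMod p × ℤ) := FreeGroup.lift ![bump, rot]

@[simp] theorem rep_of_zero : rep (of 0) = (bump : Perm (ZMod p × ℤ)) := by
  simp [rep]

@[simp] theorem rep_of_one : rep (of 1) = (rot : Perm (ZMod p × ℤ)) := by
  simp [rep]

end WreathPerm

open WreathPerm in
theorem conj_forces_power_general (p r : ℤ) (hp : 1 < p) (hcop : Int.gcd p r = 1)
    (l k : ℕ) (x : Fin l → ℤ) (y : Fin l → ℕ) (n : Fin k → ℤ) (m : Fin k → ℤ)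
    (b lam : FreeGroup (Fin 2)) (hb : b = FreeGroup.of 0) (hlam : lam = FreeGroup.of 1)
    (v u : FreeGroup (Fin 2))
    (hv : v = ((List.finRange l).map (fun i => lam ^ (p * x i) * (b * lam ^ r) ^ (y i))).prod)
    (hu : u = ((List.finRange k).map (fun i => lam ^ (p * n i) * b ^ (m i))).prod)
    (hconj : IsConj u v) :
    (∀ j, y j = 0) ∧ v = lam ^ (p * (∑ i, x i)) := by
  lift p to ℕ using by omega
  have : Fact (1 < p) := ⟨by exact_mod_cast hp⟩
  have hr : IsUnit (r : ZMod p) :=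
    (ZMod.coe_int_isUnit_iff_isCoprime r p).2 (Int.isCoprime_iff_gcd_eq_one.2 hcop)
  subst hb hlam
  have hrep_u : rep u = (bump : Perm (ZMod p × ℤ)) ^ ((List.finRange k).map m).sum := by
    rw [hu, map_list_prod, List.map_map, ← List.prod_map_zpow_eq_zpow_sum]
    congr 2; funext i; simp [rot_zpow_natCast_mul]
  have hrep_v : rep v =
      (bump * rot ^ r : Perm (ZMod p × ℤ)) ^ ((List.finRange l).map y).sum := by
    rw [hv, map_list_prod, List.map_map, ← List.prod_map_pow_eq_pow_sum]
    congr 2; funext i; simp [rot_zpow_natCast_mul]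
  have hfix : rep u ((1 : ZMod p), (0 : ℤ)) = (1, 0) := by
    rw [hrep_u]
    exact Perm.zpow_apply_eq_self_of_apply_eq_self (by simp [bump_apply]) _
  obtain ⟨x₀, hx₀⟩ := (rep.map_isConj hconj).exists_apply_eq_self hfix
  rw [hrep_v] at hx₀
  have hy : ∀ j, y j = 0 := by
    simpa [← Fin.sum_univ_def, Finset.sum_eq_zero_iff] using
      Perm.eq_zero_of_pow_apply_eq_self (height_bump_mul_rot_zpow hr) hx₀
  refine ⟨hy, ?_⟩
  simp [hv, hy, List.prod_map_zpow_eq_zpow_sum, ← Fin.sum_univ_def, Finset.mul_sum]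

/-- in the free group on `b = of 0`, `λ = of 1`, with `p > 1`, `r ≠ 0`,
`gcd (p, r) = 1`, if the word
`v = λ^{p x₁} (b λ^r)^{y₁} ⋯ λ^{p x_l} (b λ^r)^{y_l}` (all `xᵢ` nonzero of the same
sign, all `yᵢ ∈ ℕ`) is conjugate to
`u = λ^{p n₁} b^{m₁} ⋯ λ^{p n_k} b^{m_k}` (all `nᵢ` nonzero of the same sign, all
`mᵢ` nonzero of the same sign), then every `y_j = 0` and
`v = λ^{p (x₁ + ⋯ + x_l)}` is a `p`-th power. -/
theorem conj_forces_power (p r : ℤ) (hp : 1 < p) (hr : r ≠ 0) (hcop : Int.gcd p r = 1)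
    (l k : ℕ) (x : Fin l → ℤ) (y : Fin l → ℕ) (n : Fin k → ℤ) (m : Fin k → ℤ)
    (hx : ∀ i j, 0 < x i * x j) (hn : ∀ i j, 0 < n i * n j) (hm : ∀ i j, 0 < m i * m j)
    (b lam : FreeGroup (Fin 2)) (hb : b = FreeGroup.of 0) (hlam : lam = FreeGroup.of 1)
    (v u : FreeGroup (Fin 2))
    (hv : v = ((List.finRange l).map (fun i => lam ^ (p * x i) * (b * lam ^ r) ^ (y i))).prod)
    (hu : u = ((List.finRange k).map (fun i => lam ^ (p * n i) * b ^ (m i))).prod)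
    (hconj : IsConj u v) :
    (∀ j, y j = 0) ∧ v = lam ^ (p * (∑ i, x i)) :=
  conj_forces_power_general p r hp hcop l k x y n m b lam hb hlam v u hv hu hconj
end

section
/- Let F be the free group on {b, λ}, p > 1 and r nonzero integers with gcd(p, r) = 1. Consider a cyclically reduced word v = λ^{p x₁}(b λ^r)^{y₁} ⋯ λ^{p x_l}(b λ^r)^{y_l} with all x_i nonzero of the same sign and all y_i positive. If some y_j ≥ 2, then v cannot be conjugate in F to any word of the form λ^{p n₁} b^{m₁} ⋯ λ^{p n_k} b^{m_k} with all n_i nonzero and all m_i nonzero. -/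
/-!
Let `ζ` be a primitive `p`-th root of unity in `ℂ`, so that `ω = ζ ^ r ≠ 1` by coprimality.
Represent the free group by permutations of `ℂ`: send `λ` to the rotation `t : z ↦ ζ z` and `b`
to the rotation `s : z ↦ ω⁻¹ (z - 1) + 1` about `1`. Both have finite order, and `λ ^ p ↦ 1`, so
every word `λ^{p n₁} b^{m₁} ⋯ λ^{p n_k} b^{m_k}` maps into the finite group generated by `s`. But
`s * t ^ r` is the translation by `1 - ω⁻¹ ≠ 0`, so `v` maps to its power `∑ yᵢ > 0`, a
translation of infinite order, and conjugate elements cannot differ in this way.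
-/

section

variable {G : Type*} [Group G] {ι : Type*}

theorem list_prod_map_zpow_mul_zpow_mem_zpowers {s t : G} {p : ℤ} (ht : t ^ p = 1)
    (L : List ι) (n m : ι → ℤ) :
    (L.map fun i => t ^ (p * n i) * s ^ m i).prod ∈ Subgroup.zpowers s :=
  Subgroup.list_prod_mem _ fun _ hg => by
    obtain ⟨i, -, rfl⟩ := List.mem_map.mp hg
    rw [zpow_mul, ht, one_zpow, one_mul]
    exact Subgroup.zpow_mem_zpowers s (m i)

theorem list_prod_map_zpow_mul_pow {u t : G} {p : ℤ} (ht : t ^ p = 1)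
    (L : List ι) (x : ι → ℤ) (y : ι → ℕ) :
    (L.map fun i => t ^ (p * x i) * u ^ y i).prod = u ^ (L.map y).sum := by
  induction L with
  | nil => simp
  | cons i L ih =>
    rw [List.map_cons, List.prod_cons, ih, List.map_cons, List.sum_cons, zpow_mul, ht, one_zpow,
      one_mul, pow_add]

end

theorem not_isConj_list_prod_of_map {H G : Type*} [Group H] [Group G] (φ : H →* G)
    {b lam : H} {p r : ℤ} (hlam : φ lam ^ p = 1) (hb : IsOfFinOrder (φ b))
    (hblam : ¬ IsOfFinOrder (φ (b * lam ^ r))) {ι κ : Type*}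
    (L : List ι) (n m : ι → ℤ) (L' : List κ) (x : κ → ℤ) (y : κ → ℕ)
    (hy : (L'.map y).sum ≠ 0) :
    ¬ IsConj (L.map fun i => lam ^ (p * n i) * b ^ m i).prod
      (L'.map fun i => lam ^ (p * x i) * (b * lam ^ r) ^ y i).prod := by
  intro hconj
  have hw : IsOfFinOrder (φ (L.map fun i => lam ^ (p * n i) * b ^ m i).prod) := by
    simp only [map_list_prod, List.map_map, Function.comp_def, map_mul, map_zpow]
    exact hb.of_mem_zpowers (list_prod_map_zpow_mul_zpow_mem_zpowers hlam L n m)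
  have hv : φ (L'.map fun i => lam ^ (p * x i) * (b * lam ^ r) ^ y i).prod
      = φ (b * lam ^ r) ^ (L'.map y).sum := by
    simp only [map_list_prod, List.map_map, Function.comp_def, map_mul, map_zpow, map_pow]
    exact list_prod_map_zpow_mul_pow hlam L' x y
  have hv_fin := (φ.map_isConj hconj).isOfFinOrder hw
  rw [hv] at hv_fin
  exact hblam (hv_fin.of_pow hy)

theorem not_isOfFinOrder_addRight {α : Type*} [AddGroup α] [IsAddTorsionFree α] {c : α}
    (hc : c ≠ 0) : ¬ IsOfFinOrder (Equiv.addRight c) := by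
  rw [isOfFinOrder_iff_pow_eq_one]
  rintro ⟨n, hn, hcn⟩
  have hnc : n • c = 0 := by simpa using congrArg (· 0) hcn
  simp [hc, hn.ne'] at hnc

section

variable {K : Type*} [Field K]

theorem conj_addRight_toPerm_inv_mul_toPerm (a : Kˣ) :
    MulAut.conj (Equiv.addRight 1) (MulAction.toPerm a⁻¹) * MulAction.toPerm a
      = Equiv.addRight (1 - ((a⁻¹ : Kˣ) : K)) := by
  ext z
  simp [MulAut.conj_apply, Units.smul_def, add_comm, sub_eq_add_neg]

theorem exists_perm_isOfFinOrder_not_isOfFinOrder_mul_zpow [CharZero K] {ζ : Kˣ} {p r : ℤ}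
    (hp : p ≠ 0) (hζp : ζ ^ p = 1) (hζr : ζ ^ r ≠ 1) :
    ∃ s t : Equiv.Perm K, t ^ p = 1 ∧ IsOfFinOrder s ∧ ¬ IsOfFinOrder (s * t ^ r) := by
  let ρ := MulAction.toPermHom Kˣ K
  refine ⟨MulAut.conj (Equiv.addRight 1) (ρ (ζ ^ r)⁻¹), ρ ζ, ?_, ?_, ?_⟩
  · rw [← map_zpow, hζp, map_one]
  · have hζ : IsOfFinOrder ζ := isOfFinOrder_iff_zpow_eq_one.mpr ⟨p, hp, hζp⟩
    exact (isConj_iff.mpr ⟨_, rfl⟩).isOfFinOrder (ρ.isOfFinOrder hζ.zpow.inv)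
  · rw [← map_zpow]
    refine (conj_addRight_toPerm_inv_mul_toPerm (ζ ^ r)).symm ▸ not_isOfFinOrder_addRight ?_
    rwa [sub_ne_zero, ne_comm, Ne, Units.val_eq_one, inv_eq_one]

end

theorem Complex.exists_zpow_eq_one_zpow_ne_one {p r : ℤ} (hp : p ≠ 0) (hpr : ¬ p ∣ r) :
    ∃ ζ : ℂˣ, ζ ^ p = 1 ∧ ζ ^ r ≠ 1 := by
  obtain ⟨ζ, hζ⟩ : ∃ ζ : ℂˣ, IsPrimitiveRoot ζ p.natAbs :=
    ⟨_, (Complex.isPrimitiveRoot_exp p.natAbs (by omega)).isUnit_unit (by omega)⟩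
  refine ⟨ζ, (hζ.zpow_eq_one_iff_dvd p).mpr (Int.natAbs_dvd.mpr dvd_rfl), fun h => hpr ?_⟩
  exact Int.natAbs_dvd.mp ((hζ.zpow_eq_one_iff_dvd r).mp h)

theorem no_conjugate_if_double_y_general (p r : ℤ) (hp : 1 < p)
    (hcop : Int.gcd p r = 1) (l : ℕ) (x : Fin l → ℤ) (y : Fin l → ℕ)
    (hyy : ∃ j, 2 ≤ y j)
    (b lam : FreeGroup (Fin 2)) (hb : b = FreeGroup.of 0) (hlam : lam = FreeGroup.of 1)
    (v : FreeGroup (Fin 2))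
    (hv : v = ((List.finRange l).map (fun i => lam ^ (p * x i) * (b * lam ^ r) ^ (y i))).prod) :
    ∀ (k : ℕ) (n m : Fin k → ℤ), (∀ i, n i ≠ 0) → (∀ i, m i ≠ 0) →
      ¬ IsConj (((List.finRange k).map (fun i => lam ^ (p * n i) * b ^ (m i))).prod) v := by
  intro k n m _ _
  have hpr : ¬ p ∣ r := fun h => by
    have := (Int.isCoprime_iff_gcd_eq_one.mpr hcop).isUnit_of_dvd' dvd_rfl h
    rw [Int.isUnit_iff] at this
    omega
  obtain ⟨ζ, hζp, hζr⟩ := Complex.exists_zpow_eq_one_zpow_ne_one (by omega) hpr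
  obtain ⟨s, t, ht, hs, hst⟩ :=
    exists_perm_isOfFinOrder_not_isOfFinOrder_mul_zpow (by omega) hζp hζr
  have hsum_y : ((List.finRange l).map y).sum ≠ 0 := by
    obtain ⟨j, hj⟩ := hyy
    have := List.le_sum_of_mem (List.mem_map_of_mem (f := y) (List.mem_finRange j))
    omega
  subst hb hlam hv
  exact not_isConj_list_prod_of_map (FreeGroup.lift ![s, t]) (by simpa using ht)
    (by simpa using hs) (by simpa using hst) _ n m _ x y hsum_y

/-- in the free group on `b = of 0`, `λ = of 1`, let `p > 1`, `r ≠ 0`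
with `gcd (p, r) = 1`. Consider the cyclically reduced word
`v = λ^{p x₁} (b λ^r)^{y₁} ⋯ λ^{p x_l} (b λ^r)^{y_l}` with all `xᵢ` nonzero of the
same sign and all `yᵢ` positive. If some `y_j ≥ 2`, then `v` is not conjugate to
any word of the form `λ^{p n₁} b^{m₁} ⋯ λ^{p n_k} b^{m_k}` with all `nᵢ` and all
`mᵢ` nonzero. -/
theorem no_conjugate_if_double_y (p r : ℤ) (hp : 1 < p) (hr : r ≠ 0)
    (hcop : Int.gcd p r = 1) (l : ℕ) (x : Fin l → ℤ) (y : Fin l → ℕ)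
    (hx : ∀ i j, 0 < x i * x j) (hy : ∀ i, 0 < y i) (hyy : ∃ j, 2 ≤ y j)
    (b lam : FreeGroup (Fin 2)) (hb : b = FreeGroup.of 0) (hlam : lam = FreeGroup.of 1)
    (v : FreeGroup (Fin 2))
    (hv : v = ((List.finRange l).map (fun i => lam ^ (p * x i) * (b * lam ^ r) ^ (y i))).prod) :
    ∀ (k : ℕ) (n m : Fin k → ℤ), (∀ i, n i ≠ 0) → (∀ i, m i ≠ 0) →
      ¬ IsConj (((List.finRange k).map (fun i => lam ^ (p * n i) * b ^ (m i))).prod) v :=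
  no_conjugate_if_double_y_general p r hp hcop l x y hyy b lam hb hlam v hv
end
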